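/- Let n, m ≥ 1, let f, g : Fin m → (Fin n → Fin 2) with f λ ≠ g λ for every λ, and let c : Fin m → ℂ. Define the quantum orders p : Fin m → Fin n → ℤ by p λ ℓ := ((-1)^((f λ ℓ : ℕ)) - (-1)^((g λ ℓ : ℕ))) / 2 (each value lies in {-1, 0, 1}), and set E_Σ := Σ_λ, c λ • Matrix.stdBasisMatrix (f λ) (g λ) 1. Suppose there exist rotation angles φ : Fin n → ℝ such that for every λ there is an integer q λ with Σ_ℓ (p λ ℓ : ℝ) * φ ℓ = π + 2 * π * (q λ : ℝ). Then the individual local z-rotation K φ — the diagonal matrix with (K φ) h h := Complex.exp (-(Complex.I / 2) * Σ_ℓ (φ ℓ : ℂ) * (-1)^((h ℓ : ℕ))) — satisfies (K φ) * E_Σ * (K φ)ᴴ = -E_Σ. -/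

import Mathlib

open Matrix

/-- The individual local z-rotation with angles `φ ℓ` on each qubit `ℓ`:
the diagonal matrix with entry `exp(-(i/2) ∑ ℓ, φ ℓ * (-1)^(h ℓ))` at
configuration `h`. -/
noncomputable def zRot {n : ℕ} (φ : Fin n → ℝ) :
    Matrix (Fin n → Fin 2) (Fin n → Fin 2) ℂ :=
  Matrix.diagonal fun h =>
    Complex.exp (-(Complex.I / 2) * ∑ ℓ : Fin n, (φ ℓ : ℂ) * (-1 : ℂ) ^ ((h ℓ : ℕ)))

/-! Conjugation by a diagonal matrix `diagonal d` multiplies the matrix unit at `(f, g)` by the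
phase `d f * conj (d g)`. For `zRot φ` this phase is `exp (-i ∑ ℓ, p ℓ * φ ℓ)`, with `p` the
quantum orders, and the hypothesis makes it `exp (-i (π + 2πq)) = -1` for every term. -/

open Complex

lemma diagonal_mul_single_mul_conjTranspose_diagonal {ι α : Type*} [Fintype ι] [DecidableEq ι]
    [Semiring α] [StarRing α] (d : ι → α) (i j : ι) (c : α) :
    diagonal d * single i j c * (diagonal d)ᴴ = single i j (d i * c * star (d j)) := by
  ext a b
  rw [diagonal_conjTranspose, mul_diagonal, diagonal_mul, single_apply, single_apply]
  split_ifs with h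
  · obtain ⟨rfl, rfl⟩ := h
    rfl
  · simp

lemma Int.cast_neg_one_pow_sub_neg_one_pow_div_two {K : Type*} [DivisionRing K] [CharZero K]
    (a b : ℕ) : ((((-1 : ℤ) ^ a - (-1) ^ b) / 2 : ℤ) : K) = ((-1 : K) ^ a - (-1) ^ b) / 2 := by
  have hdvd : (2 : ℤ) ∣ (-1) ^ a - (-1) ^ b :=
    ((odd_neg_one.pow).sub_odd odd_neg_one.pow).two_dvd
  rw [Int.cast_div hdvd (by norm_num)]
  push_cast
  rfl

lemma zRot_apply_mul_star_zRot_apply {n : ℕ} (φ : Fin n → ℝ) (h h' : Fin n → Fin 2) :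
    zRot φ h h * star (zRot φ h' h') =
      exp (-I * ∑ ℓ, ((((-1 : ℝ) ^ (h ℓ : ℕ) - (-1) ^ (h' ℓ : ℕ)) / 2 * φ ℓ : ℝ) : ℂ)) := by
  rw [zRot, diagonal_apply_eq, diagonal_apply_eq, star_def, ← exp_conj, ← exp_add]
  congr 1
  simp only [map_mul, map_neg, map_div₀, conj_I, map_sum, conj_ofReal, map_pow, map_one, map_ofNat]
  push_cast
  simp only [Finset.mul_sum, ← Finset.sum_add_distrib]
  refine Finset.sum_congr rfl fun ℓ _ => ?_
  ring

lemma exp_neg_I_mul_odd_pi (q : ℤ) : exp (-I * ((Real.pi + 2 * Real.pi * q : ℝ) : ℂ)) = -1 := by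
  have : -I * ((Real.pi + 2 * Real.pi * q : ℝ) : ℂ) =
      -(Real.pi * I) + (-q : ℤ) * (2 * Real.pi * I) := by
    push_cast
    ring
  rw [this, exp_add, exp_int_mul_two_pi_mul_I, exp_neg, exp_pi_mul_I]
  norm_num

lemma zRot_mul_single_mul_conjTranspose_zRot {n : ℕ} (φ : Fin n → ℝ) (f g : Fin n → Fin 2)
    (c : ℂ) (hφ : ∃ q : ℤ,
      ∑ ℓ : Fin n, ((((-1 : ℤ) ^ ((f ℓ : ℕ)) - (-1 : ℤ) ^ ((g ℓ : ℕ))) / 2 : ℤ) : ℝ) * φ ℓ =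
        Real.pi + 2 * Real.pi * (q : ℝ)) :
    zRot φ * single f g c * (zRot φ)ᴴ = -single f g c := by
  obtain ⟨q, hq⟩ := hφ
  have hphase : zRot φ f f * star (zRot φ g g) = -1 := by
    simp only [Int.cast_neg_one_pow_sub_neg_one_pow_div_two] at hq
    rw [zRot_apply_mul_star_zRot_apply, ← ofReal_sum, hq, exp_neg_I_mul_odd_pi]
  have hdiag : diagonal (diag (zRot φ)) = zRot φ :=
    (isDiag_diagonal _ : (zRot φ).IsDiag).diagonal_diag
  rw [← hdiag, diagonal_mul_single_mul_conjTranspose_diagonal, diag_apply, diag_apply,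
    mul_right_comm, hphase, neg_one_mul, single_neg]

theorem stmt15 (n m : ℕ)
    (f g : Fin m → (Fin n → Fin 2)) (c : Fin m → ℂ)
    (φ : Fin n → ℝ)
    (hφ : ∀ μ : Fin m, ∃ q : ℤ,
      ∑ ℓ : Fin n,
          ((((-1 : ℤ) ^ ((f μ ℓ : ℕ)) - (-1 : ℤ) ^ ((g μ ℓ : ℕ))) / 2 : ℤ) : ℝ) * φ ℓ =
        Real.pi + 2 * Real.pi * (q : ℝ)) :
    zRot φ * (∑ μ : Fin m, c μ • Matrix.single (f μ) (g μ) (1 : ℂ)) * (zRot φ)ᴴ =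
      -(∑ μ : Fin m, c μ • Matrix.single (f μ) (g μ) (1 : ℂ)) := by
  simp only [smul_single, smul_eq_mul, mul_one, Finset.mul_sum, Finset.sum_mul,
    ← Finset.sum_neg_distrib]
  exact Finset.sum_congr rfl fun μ _ => zRot_mul_single_mul_conjTranspose_zRot φ _ _ _ (hφ μ)
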